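/- arXiv:2602.10864 — 2 statements merged into one kernel-verified Lean document; each statement's English description precedes it below -/
import Mathlib

section
/- Let d ∈ ℤ>0 and let G be a contracting weighted RLSLG with |rle(rhs(A))| ≤ d for every variable A. Then for every variable A of G and every real τ > 1 there exists a sequence rhs_τ(A) of symbols of G such that exp(rhs_τ(A)) = exp(A) and: (1) every variable B occurring in rhs_τ(A) satisfies ⟨B⟩ ≤ ⟨A⟩/τ; (2) |rle(rhs_τ(A))| ≤ 2dτ; (3) every contiguous substring X of rhs_τ(A) with ⟨X⟩ ≤ ⟨A⟩/τ satisfies |rle(X)| ≤ 2d⌈log₂ τ⌉. -/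
open scoped BigOperators

/-- Symbols of a grammar with `nv` variables and terminal alphabet `α`:
variables are `Sum.inl`, terminals are `Sum.inr`. -/
abbrev GSym (nv : ℕ) (α : Type) : Type := Sum (Fin nv) α

open Classical in
/-- The number of runs (maximal blocks of equal consecutive entries) of a list,
i.e. the length `|rle(X)|` of its run-length encoding. -/
noncomputable def numRuns {β : Type} : List β → ℕ
  | [] => 0
  | [_] => 1
  | a :: b :: l => (if a = b then 0 else 1) + numRuns (b :: l)

/-- A weighted straight-line grammar (SLG) with variables `Fin nv` and terminal
alphabet `α`.  The same structure is used for run-length straight-line grammars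
(RLSLGs), which differ from SLGs only in how their size is measured
(`sizeRLE` instead of `size`).  The field `rank` witnesses the existence of a
strict linear order `≺` on the variables with `B ≺ A` whenever `B` occurs in
`rhs A`. -/
structure WSLG (nv : ℕ) (α : Type) where
  rhs : Fin nv → List (GSym nv α)
  start : GSym nv α
  wt : α → ℕ
  wt_pos : ∀ a, 1 ≤ wt a
  rank : Fin nv → ℕ
  rank_lt : ∀ A B, Sum.inl B ∈ rhs A → rank B < rank A

namespace WSLG

variable {nv nv' : ℕ} {α : Type}

/-- Fuel-based expansion; the fuel is always sufficient thanks to `rank_lt`. -/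
def expandFuel (G : WSLG nv α) : ℕ → GSym nv α → List α
  | _, Sum.inr a => [a]
  | 0, Sum.inl _ => []
  | n + 1, Sum.inl A => ((G.rhs A).map (G.expandFuel n)).flatten

/-- The expansion `exp(s)` of a symbol `s`. -/
def exp (G : WSLG nv α) : GSym nv α → List α
  | Sum.inr a => [a]
  | Sum.inl A => G.expandFuel (G.rank A + 1) (Sum.inl A)

/-- The expansion of a sequence of symbols. -/
def expSeq (G : WSLG nv α) (xs : List (GSym nv α)) : List α :=
  (xs.map G.exp).flatten

/-- The weight `⟨s⟩` of a symbol: total weight of the characters of its expansion. -/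
def wtSym (G : WSLG nv α) (s : GSym nv α) : ℕ :=
  ((G.exp s).map G.wt).sum

/-- The weight of a sequence of symbols. -/
def wtSeq (G : WSLG nv α) (xs : List (GSym nv α)) : ℕ :=
  ((G.expSeq xs).map G.wt).sum

/-- The size `|G|` of an SLG: total length of all right-hand sides. -/
def size (G : WSLG nv α) : ℕ := ∑ A, (G.rhs A).length

/-- The size `|G|` of an RLSLG: total run-length-encoded size of all
right-hand sides. -/
noncomputable def sizeRLE (G : WSLG nv α) : ℕ := ∑ A, numRuns (G.rhs A)

/-- A grammar is unweighted if every terminal has weight 1. -/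
def Unweighted (G : WSLG nv α) : Prop := ∀ a, G.wt a = 1

/-- `f` is a grammar homomorphism from `G` to `H`:
`exp_G(A) = exp_H(f A)` for every variable `A` of `G`. -/
def IsHom (G : WSLG nv α) (H : WSLG nv' α) (f : Fin nv → Fin nv') : Prop :=
  ∀ A, G.exp (Sum.inl A) = H.exp (Sum.inl (f A))

/-- Normal form for RLSLGs: every right-hand side is either a pair of exactly
two symbols or a power `s^k` of a single symbol with `k > 2`. -/
def NormalForm (G : WSLG nv α) : Prop :=
  ∀ A, (∃ s t : GSym nv α, G.rhs A = [s, t]) ∨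
       (∃ (s : GSym nv α) (k : ℕ), 2 < k ∧ G.rhs A = List.replicate k s)

/-- A grammar is contracting if no variable has a heavy variable child, i.e.
every variable child `B` of `A` satisfies `⟨B⟩ ≤ ⟨A⟩/2`. -/
def Contracting (G : WSLG nv α) : Prop :=
  ∀ A : Fin nv, ∀ B : Fin nv, Sum.inl B ∈ G.rhs A →
    2 * G.wtSym (Sum.inl B) ≤ G.wtSym (Sum.inl A)

/-- A variable `A` is `τ`-nice (w.r.t. the constant `d`):
(1) every variable child `B` satisfies `⟨B⟩ ≤ ⟨A⟩/τ`;
(2) `|rle(rhs A)| ≤ 2dτ`;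
(3) every contiguous substring `X` of `rhs A` with `⟨X⟩ ≤ ⟨A⟩/τ` satisfies
`|rle(X)| ≤ 2d⌈log₂ τ⌉`. -/
def NiceVar (G : WSLG nv α) (d : ℕ) (τ : ℝ) (A : Fin nv) : Prop :=
  (∀ B : Fin nv, Sum.inl B ∈ G.rhs A →
      (G.wtSym (Sum.inl B) : ℝ) ≤ (G.wtSym (Sum.inl A) : ℝ) / τ) ∧
  ((numRuns (G.rhs A) : ℝ) ≤ 2 * d * τ) ∧
  (∀ X : List (GSym nv α), X <:+: G.rhs A →
      (G.wtSeq X : ℝ) ≤ (G.wtSym (Sum.inl A) : ℝ) / τ →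
      (numRuns X : ℝ) ≤ 2 * d * (⌈Real.logb 2 τ⌉ : ℝ))

/-- A grammar is `(τr, τv)`-nice (w.r.t. `d`) if its start symbol is `τr`-nice
and all its other variables are `τv`-nice. -/
def Nice (G : WSLG nv α) (d : ℕ) (τr τv : ℝ) : Prop :=
  (∀ A : Fin nv, Sum.inl A = G.start → G.NiceVar d τr A) ∧
  (∀ A : Fin nv, Sum.inl A ≠ G.start → G.NiceVar d τv A)

/-- Parent–child step in the parse tree: from the node `(A, a)` to its `i`-th
child `(B_i, a + ⟨B_0 ⋯ B_{i-1}⟩)` where `rhs A = B_0 ⋯ B_{k-1}`. -/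
def PTStep (G : WSLG nv α) (p q : GSym nv α × ℕ) : Prop :=
  ∃ (A : Fin nv) (i : ℕ) (h : i < (G.rhs A).length),
    p.1 = Sum.inl A ∧
    q = ((G.rhs A).get ⟨i, h⟩, p.2 + G.wtSeq ((G.rhs A).take i))

/-- `PTNode G ℓ v` states that `v` is a node of the parse tree `P_G` whose
path from the root `(start, 0)` has `ℓ` edges. -/
inductive PTNode (G : WSLG nv α) : ℕ → GSym nv α × ℕ → Prop
  | root : PTNode G 0 (G.start, 0)
  | step {n : ℕ} {p q : GSym nv α × ℕ} :
      PTNode G n p → PTStep G p q → PTNode G (n + 1) q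

/-- Fuel-based height; the fuel is always sufficient thanks to `rank_lt`. -/
def heightFuel (G : WSLG nv α) : ℕ → GSym nv α → ℕ
  | _, Sum.inr _ => 0
  | 0, Sum.inl _ => 0
  | n + 1, Sum.inl A => 1 + ((G.rhs A).map (G.heightFuel n)).foldr max 0

/-- The height of a symbol: `h(a) = 0` for terminals and
`h(A) = 1 + max_i h(B_i)` for a variable with `rhs A = B_0 ⋯ B_{k-1}`. -/
def heightSym (G : WSLG nv α) : GSym nv α → ℕ
  | Sum.inr _ => 0
  | Sum.inl A => G.heightFuel (G.rank A + 1) (Sum.inl A)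

/-- A leaf variable (for parameter `b`): its right-hand side consists of
terminals only and has length in `[b .. 2b)`. -/
def IsLeafVar (G : WSLG nv α) (b : ℕ) (A : Fin nv) : Prop :=
  (∀ s ∈ G.rhs A, ∃ a : α, s = Sum.inr a) ∧
  b ≤ (G.rhs A).length ∧ (G.rhs A).length < 2 * b

/-- A top variable: its right-hand side contains only variables. -/
def IsTopVar (G : WSLG nv α) (A : Fin nv) : Prop :=
  ∀ s ∈ G.rhs A, ∃ B : Fin nv, s = Sum.inl B

/-- A grammar is `b`-leafy if every variable is a leaf variable or a top
variable. -/
def BLeafy (G : WSLG nv α) (b : ℕ) : Prop :=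
  ∀ A, G.IsLeafVar b A ∨ G.IsTopVar A

open Classical in
/-- The size `|Top(G)|` of the top part of a (b-leafy) RLSLG: total
run-length-encoded size of the right-hand sides of the top variables. -/
noncomputable def topSizeRLE (G : WSLG nv α) : ℕ :=
  ∑ A, if G.IsTopVar A then numRuns (G.rhs A) else 0

open Classical in
/-- The number of leaf variables of a (b-leafy) grammar. -/
noncomputable def numLeafVars (G : WSLG nv α) (b : ℕ) : ℕ :=
  (Finset.univ.filter fun A => G.IsLeafVar b A).card

/-- For an unweighted `b`-leafy grammar `G`, the variable `A` (a top variable)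
is `τ`-nice as a variable of the top part `Top(G)`: in `Top(G)`, the variables
are the top variables of `G`, the terminals are the leaf variables of `G`, and
the weight of a symbol is the length of its `G`-expansion. -/
def NiceTopVar (G : WSLG nv α) (d : ℕ) (τ : ℝ) (A : Fin nv) : Prop :=
  (∀ B : Fin nv, Sum.inl B ∈ G.rhs A → G.IsTopVar B →
      ((G.exp (Sum.inl B)).length : ℝ) ≤ ((G.exp (Sum.inl A)).length : ℝ) / τ) ∧
  ((numRuns (G.rhs A) : ℝ) ≤ 2 * d * τ) ∧
  (∀ X : List (GSym nv α), X <:+: G.rhs A →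
      ((G.expSeq X).length : ℝ) ≤ ((G.exp (Sum.inl A)).length : ℝ) / τ →
      (numRuns X : ℝ) ≤ 2 * d * (⌈Real.logb 2 τ⌉ : ℝ))

/-- The top part `Top(G)` of an unweighted `b`-leafy grammar `G` is
`(τr, τv)`-nice (w.r.t. `d`): the start symbol, if it is a top variable, is
`τr`-nice in `Top(G)`, and all other top variables are `τv`-nice in `Top(G)`. -/
def TopNice (G : WSLG nv α) (d : ℕ) (τr τv : ℝ) : Prop :=
  (∀ A : Fin nv, G.IsTopVar A → Sum.inl A = G.start → G.NiceTopVar d τr A) ∧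
  (∀ A : Fin nv, G.IsTopVar A → Sum.inl A ≠ G.start → G.NiceTopVar d τv A)

end WSLG

/-- A data-structure problem `f : X × Y → Z` has `(M, w, t)`-certificates. -/
def HasCertificates {X Y Z : Type*} (f : X → Y → Z) (M w t : ℕ) : Prop :=
  ∃ D : Y → Fin M → (Fin w → Bool),
    ∀ x y, ∃ C : Finset (Fin M), C.card = t ∧
      ∀ y', (∀ i ∈ C, D y i = D y' i) → f x y' = f x y

/-- An input of the SLG Random Access problem with parameters `(n, g, σ)`:
an unweighted SLG of size at most `g` producing a string `T ∈ [0..σ)^n`. -/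
structure RAInput (n g σ : ℕ) where
  nv : ℕ
  G : WSLG nv (Fin σ)
  unweighted : G.Unweighted
  size_le : G.size ≤ g
  len_eq : (G.exp G.start).length = n

/-- The SLG Random Access problem: given a position `i ∈ [0..n)` and an input
producing `T`, return `T[i]`. -/
def RAProblem (n g σ : ℕ) (x : Fin n) (y : RAInput n g σ) : Fin σ :=
  (y.G.exp y.G.start).get (Fin.cast y.len_eq.symm x)

/-- The Blocked Lopsided Set Disjointness (BLSD) problem with parameters
`N, B`: queries are `S : [N] → [B]`, inputs are `T : [N] → 2^[B]`, and the
answer is whether there exists `i` with `S i ∈ T i`. -/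
def BLSDProblem (N B : ℕ) (S : Fin N → Fin B) (T : Fin N → Finset (Fin B)) : Prop :=
  ∃ i, S i ∈ T i

section NR
variable {β γ : Type}

@[simp] lemma numRuns_nil : numRuns ([] : List β) = 0 := by simp [numRuns]

@[simp] lemma numRuns_singleton (a : β) : numRuns [a] = 1 := by simp [numRuns]

lemma numRuns_cons_cons_eq {a b : β} (l : List β) (h : a = b) :
    numRuns (a :: b :: l) = numRuns (b :: l) := by
  simp only [numRuns, if_pos h, Nat.zero_add]

lemma numRuns_cons_cons_ne {a b : β} (l : List β) (h : a ≠ b) :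
    numRuns (a :: b :: l) = 1 + numRuns (b :: l) := by
  simp only [numRuns, if_neg h]

lemma numRuns_cons_cons_le (a b : β) (l : List β) :
    numRuns (a :: b :: l) ≤ 1 + numRuns (b :: l) := by
  by_cases h : a = b
  · rw [numRuns_cons_cons_eq l h]; omega
  · rw [numRuns_cons_cons_ne l h]

lemma numRuns_le_cons_cons (a b : β) (l : List β) :
    numRuns (b :: l) ≤ numRuns (a :: b :: l) := by
  by_cases h : a = b
  · rw [numRuns_cons_cons_eq l h]
  · rw [numRuns_cons_cons_ne l h]; omega

lemma one_le_numRuns {l : List β} (h : l ≠ []) : 1 ≤ numRuns l := by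
  match l with
  | [a] => simp
  | a :: b :: t =>
    have := one_le_numRuns (l := b :: t) (by simp)
    have := numRuns_le_cons_cons a b t
    omega

lemma numRuns_le_cons (a : β) (l : List β) : numRuns l ≤ numRuns (a :: l) := by
  match l with
  | [] => simp
  | b :: t => exact numRuns_le_cons_cons a b t

lemma numRuns_cons_le (a : β) (l : List β) : numRuns (a :: l) ≤ 1 + numRuns l := by
  match l with
  | [] => simp
  | b :: t => exact numRuns_cons_cons_le a b t

lemma numRuns_append_le (l₁ l₂ : List β) :
    numRuns (l₁ ++ l₂) ≤ numRuns l₁ + numRuns l₂ := by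
  match l₁ with
  | [] => simp
  | [a] => simpa using numRuns_cons_le a l₂
  | a :: b :: t =>
    have ih := numRuns_append_le (b :: t) l₂
    simp only [List.cons_append] at *
    by_cases h : a = b
    · rw [numRuns_cons_cons_eq _ h, numRuns_cons_cons_eq _ h]; omega
    · rw [numRuns_cons_cons_ne _ h, numRuns_cons_cons_ne _ h]; omega

lemma numRuns_le_append_left (l₁ l₂ : List β) : numRuns l₂ ≤ numRuns (l₁ ++ l₂) := by
  induction l₁ with
  | nil => simp
  | cons a t ih => simpa using ih.trans (numRuns_le_cons a (t ++ l₂))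

lemma numRuns_le_append_right (l₁ l₂ : List β) : numRuns l₁ ≤ numRuns (l₁ ++ l₂) := by
  match l₁ with
  | [] => simp
  | [a] => simpa using one_le_numRuns (l := a :: l₂) (by simp)
  | a :: b :: t =>
    have ih := numRuns_le_append_right (b :: t) l₂
    simp only [List.cons_append] at *
    by_cases h : a = b
    · rw [numRuns_cons_cons_eq _ h, numRuns_cons_cons_eq _ h]; omega
    · rw [numRuns_cons_cons_ne _ h, numRuns_cons_cons_ne _ h]; omega

lemma numRuns_infix_le {X Y : List β} (h : X <:+: Y) : numRuns X ≤ numRuns Y := by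
  obtain ⟨s, t, rfl⟩ := h
  calc numRuns X ≤ numRuns (X ++ t) := numRuns_le_append_right X t
    _ ≤ numRuns (s ++ (X ++ t)) := numRuns_le_append_left s (X ++ t)
    _ = numRuns (s ++ X ++ t) := by rw [List.append_assoc]

lemma flatten_map_id {f : β → List β} {xs : List β} (h : ∀ s ∈ xs, f s = [s]) :
    (xs.map f).flatten = xs := by
  induction xs with
  | nil => simp
  | cons a t ih =>
    simp only [List.map_cons, List.flatten_cons, h a (by simp)]
    simp [ih fun s hs => h s (by simp [hs])]

lemma suffix_flatten_decomp (f : β → List γ) (xs : List β) (X : List γ)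
    (h : X <:+ (xs.map f).flatten) :
    ∃ zs X', X = X' ++ (zs.map f).flatten ∧ zs <:+ xs ∧
      (X' = [] ∨ ∃ s, (s :: zs) <:+ xs ∧ X' <:+ f s) := by
  induction xs generalizing X with
  | nil =>
    refine ⟨[], [], ?_, by simp, Or.inl rfl⟩
    simpa using List.suffix_nil.mp (by simpa using h)
  | cons s rest ih =>
    simp only [List.map_cons, List.flatten_cons] at h
    obtain ⟨t, ht⟩ := h
    rcases List.append_eq_append_iff.mp ht with ⟨a', h1, h2⟩ | ⟨c', h1, h2⟩
    · exact ⟨rest, a', h2, List.suffix_cons s rest,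
        Or.inr ⟨s, List.suffix_rfl, h1 ▸ List.suffix_append t a'⟩⟩
    · obtain ⟨zs, X', hX, hzs, hlast⟩ := ih X ⟨c', h2.symm⟩
      refine ⟨zs, X', hX, hzs.trans (List.suffix_cons s rest), ?_⟩
      rcases hlast with rfl | ⟨u, hu, hsuf⟩
      · exact Or.inl rfl
      · exact Or.inr ⟨u, hu.trans (List.suffix_cons s rest), hsuf⟩

lemma prefix_flatten_decomp (f : β → List γ) (xs : List β) (X : List γ)
    (h : X <+: (xs.map f).flatten) :
    ∃ ys X', X = (ys.map f).flatten ++ X' ∧ ys <+: xs ∧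
      (X' = [] ∨ ∃ s, (ys ++ [s]) <+: xs ∧ X' <+: f s) := by
  induction xs generalizing X with
  | nil =>
    refine ⟨[], [], ?_, by simp, Or.inl rfl⟩
    simpa using List.prefix_nil.mp (by simpa using h)
  | cons s rest ih =>
    simp only [List.map_cons, List.flatten_cons] at h
    obtain ⟨t, ht⟩ := h
    rcases List.append_eq_append_iff.mp ht with ⟨a', h1, h2⟩ | ⟨c', h1, h2⟩
    · refine ⟨[], X, by simp, by simp, Or.inr ⟨s, ?_, h1 ▸ List.prefix_append X a'⟩⟩
      simpa using (List.prefix_append [s] rest)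
    · obtain ⟨ys, X', hX, hys, hlast⟩ := ih c' ⟨t, h2.symm⟩
      refine ⟨s :: ys, X', ?_, by simpa using hys, ?_⟩
      · simp [h1, hX]
      · rcases hlast with rfl | ⟨u, hu, hpre⟩
        · exact Or.inl rfl
        · exact Or.inr ⟨u, by simpa using hu, hpre⟩

end NR
lemma numRuns_cons_self {β : Type} (a : β) (l : List β) :
    numRuns (a :: a :: l) = numRuns (a :: l) := numRuns_cons_cons_eq _ rfl

section FL
variable {β : Type}

lemma numRuns_flatten_le (f : β → List β) (big : β → Bool) (cost : β → ℝ) (xs : List β)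
    (h1 : ∀ a ∈ xs, f a ≠ [])
    (h2 : ∀ a ∈ xs, big a = false → f a = [a])
    (h3 : ∀ a ∈ xs, (numRuns (f a) : ℝ) ≤ cost a) :
    (numRuns (xs.map f).flatten : ℝ) ≤
      (numRuns xs : ℝ) + (xs.map (fun a => if big a then cost a else 0)).sum := by
  match xs with
  | [] => simp
  | [a] =>
    by_cases hb : big a
    · have hca := h3 a (by simp)
      have h0 : (0:ℝ) ≤ (numRuns (f a) : ℝ) := by positivity
      simp only [List.map_cons, List.map_nil, List.flatten_cons, List.flatten_nil,
        List.append_nil, numRuns_singleton, List.sum_cons, List.sum_nil, hb, if_true]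
      push_cast
      linarith
    · have hfa := h2 a (by simp) (by simpa using hb)
      simp [hfa, hb]
  | a :: b :: l =>
    have hmem : ∀ x ∈ b :: l, x ∈ a :: b :: l := by
      intro x hx; simp [List.mem_cons] at hx ⊢; tauto
    have ih := numRuns_flatten_le f big cost (b :: l)
      (fun x hx => h1 x (hmem x hx)) (fun x hx => h2 x (hmem x hx)) (fun x hx => h3 x (hmem x hx))
    by_cases hb : big a
    · -- big head: plain subadditivity
      have hsub : (numRuns ((List.map f (a :: b :: l)).flatten) : ℝ) ≤
          (numRuns (f a) : ℝ) + (numRuns ((List.map f (b :: l)).flatten) : ℝ) := by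
        exact_mod_cast numRuns_append_le (f a) ((List.map f (b :: l)).flatten)
      have hca := h3 a (by simp)
      have hmono : (numRuns (b :: l) : ℝ) ≤ (numRuns (a :: b :: l) : ℝ) := by
        exact_mod_cast numRuns_le_cons_cons a b l
      calc (numRuns ((List.map f (a :: b :: l)).flatten) : ℝ)
          ≤ (numRuns (f a) : ℝ) + (numRuns ((List.map f (b :: l)).flatten) : ℝ) := hsub
        _ ≤ cost a + ((numRuns (b :: l) : ℝ)
            + ((b :: l).map (fun a => if big a then cost a else 0)).sum) := by
            exact add_le_add hca ih
        _ ≤ (numRuns (a :: b :: l) : ℝ)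
            + ((a :: b :: l).map (fun a => if big a then cost a else 0)).sum := by
            simp only [List.map_cons, List.sum_cons, hb, if_true]
            linarith
    · have hfa : f a = [a] := h2 a (by simp) (by simpa using hb)
      by_cases hab : a = b
      · -- merge
        subst hab
        have hfb : (List.map f (a :: l)).flatten = a :: ((List.map f l).flatten) := by
          simp [hfa]
        have hflat : (List.map f (a :: a :: l)).flatten
            = a :: a :: ((List.map f l).flatten) := by simp [hfa]
        rw [hflat, numRuns_cons_self, numRuns_cons_self]
        rw [hfb] at ih
        calc ((numRuns (a :: (List.map f l).flatten) : ℕ) : ℝ)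
            ≤ (numRuns (a :: l) : ℝ)
              + ((a :: l).map (fun a => if big a then cost a else 0)).sum := ih
          _ ≤ _ := by
              simp only [List.map_cons, List.sum_cons, hb, if_false]
              simp [hb]
      · -- distinct small head
        have hflat : (List.map f (a :: b :: l)).flatten
            = a :: ((List.map f (b :: l)).flatten) := by simp [hfa]
        rw [hflat, numRuns_cons_cons_ne _ hab]
        have hc : (numRuns (a :: ((List.map f (b :: l)).flatten)) : ℝ)
            ≤ 1 + (numRuns ((List.map f (b :: l)).flatten) : ℝ) := by
          exact_mod_cast numRuns_cons_le a ((List.map f (b :: l)).flatten)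
        calc (numRuns (a :: ((List.map f (b :: l)).flatten)) : ℝ)
            ≤ 1 + (numRuns ((List.map f (b :: l)).flatten) : ℝ) := hc
          _ ≤ 1 + ((numRuns (b :: l) : ℝ)
              + ((b :: l).map (fun a => if big a then cost a else 0)).sum) := by linarith
          _ ≤ _ := by
              simp only [List.map_cons, List.sum_cons, hb, if_false]
              push_cast
              simp [hb]
              linarith
end FL
section SumHelpers
variable {β : Type}

lemma sum_if_affine (p : β → Bool) (g : β → ℝ) (c e : ℝ) (xs : List β) :
    (xs.map (fun s => if p s then c * g s + e else 0)).sum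
      = c * (xs.map (fun s => if p s then g s else 0)).sum + e * (xs.countP p : ℝ) := by
  induction xs with
  | nil => simp
  | cons a t ih =>
    by_cases h : p a <;>
      simp [h, ih, List.countP_cons, Nat.cast_add] <;> push_cast <;> ring

lemma sum_if_const (p : β → Bool) (c : ℝ) (xs : List β) :
    (xs.map (fun s => if p s then c else 0)).sum = (xs.countP p : ℝ) * c := by
  induction xs with
  | nil => simp
  | cons a t ih =>
    by_cases h : p a <;> simp [h, ih, List.countP_cons] <;> push_cast <;> ring

lemma sum_if_nonneg (p : β → Bool) (g : β → ℝ) (hg : ∀ s, 0 ≤ g s) (xs : List β) :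
    0 ≤ (xs.map (fun s => if p s then g s else 0)).sum := by
  apply List.sum_nonneg
  intro x hx
  obtain ⟨s, _, rfl⟩ := List.mem_map.mp hx
  by_cases h : p s <;> simp [h, hg s]

end SumHelpers

namespace WSLG
variable {nv : ℕ} {α : Type}

lemma expandFuel_eq_exp (G : WSLG nv α) :
    ∀ n (s : GSym nv α), (∀ B, s = Sum.inl B → G.rank B < n) → G.expandFuel n s = G.exp s := by
  intro n
  induction n using Nat.strong_induction_on with
  | _ n ih =>
    intro s hs
    match s with
    | Sum.inr a => cases n <;> rfl
    | Sum.inl B =>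
      have hB := hs B rfl
      match n, hB with
      | m + 1, _ =>
        show ((G.rhs B).map (G.expandFuel m)).flatten = G.exp (Sum.inl B)
        have h2 : G.exp (Sum.inl B) = ((G.rhs B).map (G.expandFuel (G.rank B))).flatten := rfl
        rw [h2]
        congr 1
        apply List.map_congr_left
        intro c hc
        have hr : ∀ C, c = Sum.inl C → G.rank C < G.rank B := by
          rintro C rfl; exact G.rank_lt B C hc
        rw [ih m (by omega) c (fun C h => lt_of_lt_of_le (hr C h) (by omega)),
          ih (G.rank B) (by omega) c (fun C h => hr C h)]

lemma exp_inl (G : WSLG nv α) (B : Fin nv) : G.exp (Sum.inl B) = G.expSeq (G.rhs B) := by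
  show ((G.rhs B).map (G.expandFuel (G.rank B))).flatten = _
  unfold expSeq
  congr 1
  apply List.map_congr_left
  intro c hc
  exact G.expandFuel_eq_exp (G.rank B) c (by rintro C rfl; exact G.rank_lt B C hc)

@[simp] lemma expSeq_nil (G : WSLG nv α) : G.expSeq ([] : List (GSym nv α)) = [] := rfl

@[simp] lemma expSeq_cons (G : WSLG nv α) (s : GSym nv α) (l : List (GSym nv α)) :
    G.expSeq (s :: l) = G.exp s ++ G.expSeq l := by simp [expSeq]

lemma expSeq_append (G : WSLG nv α) (l₁ l₂ : List (GSym nv α)) :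
    G.expSeq (l₁ ++ l₂) = G.expSeq l₁ ++ G.expSeq l₂ := by simp [expSeq]

lemma expSeq_flatten (G : WSLG nv α) (LL : List (List (GSym nv α))) :
    G.expSeq LL.flatten = (LL.map G.expSeq).flatten := by
  induction LL with
  | nil => rfl
  | cons l t ih => simp [expSeq_append, ih]

@[simp] lemma wtSeq_nil (G : WSLG nv α) : G.wtSeq ([] : List (GSym nv α)) = 0 := rfl

lemma wtSeq_cons (G : WSLG nv α) (s : GSym nv α) (l : List (GSym nv α)) :
    G.wtSeq (s :: l) = G.wtSym s + G.wtSeq l := by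
  simp [wtSeq, wtSym, expSeq_cons]

lemma wtSeq_append (G : WSLG nv α) (l₁ l₂ : List (GSym nv α)) :
    G.wtSeq (l₁ ++ l₂) = G.wtSeq l₁ + G.wtSeq l₂ := by
  simp [wtSeq, expSeq_append]

lemma wtSym_inl (G : WSLG nv α) (B : Fin nv) : G.wtSym (Sum.inl B) = G.wtSeq (G.rhs B) := by
  simp [wtSym, wtSeq, exp_inl]

lemma wtSeq_eq_sum (G : WSLG nv α) (xs : List (GSym nv α)) :
    G.wtSeq xs = (xs.map G.wtSym).sum := by
  induction xs with
  | nil => rfl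
  | cons s l ih => simp [wtSeq_cons, ih]

lemma wtSeq_infix_le (G : WSLG nv α) {X Y : List (GSym nv α)} (h : X <:+: Y) :
    G.wtSeq X ≤ G.wtSeq Y := by
  obtain ⟨s, t, rfl⟩ := h
  simp [wtSeq_append]
  omega

lemma exp_ne_nil (G : WSLG nv α) {s : GSym nv α} (h : 0 < G.wtSym s) : G.exp s ≠ [] := by
  intro he
  simp [wtSym, he] at h

end WSLG

/-- The `τ`-rewriting of a symbol: keep terminals and "small" variables, and
recursively expand big variables.  Fuel-based; fuel `rank + 1` suffices. -/
def rwTau {nv : ℕ} {α : Type} (G : WSLG nv α) (sm : Fin nv → Bool) :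
    ℕ → GSym nv α → List (GSym nv α)
  | _, Sum.inr a => [Sum.inr a]
  | 0, Sum.inl B => [Sum.inl B]
  | n + 1, Sum.inl B =>
      if sm B then [Sum.inl B] else ((G.rhs B).map (rwTau G sm n)).flatten

section RW
variable {nv : ℕ} {α : Type} (G : WSLG nv α) (sm : Fin nv → Bool)

@[simp] lemma rwTau_inr (n : ℕ) (a : α) : rwTau G sm n (Sum.inr a) = [Sum.inr a] := by
  cases n <;> rfl

lemma rwTau_small {B : Fin nv} (h : sm B = true) (n : ℕ) :
    rwTau G sm n (Sum.inl B) = [Sum.inl B] := by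
  cases n <;> simp [rwTau, h]

lemma rwTau_big {B : Fin nv} (h : sm B = false) (n : ℕ) :
    rwTau G sm (n + 1) (Sum.inl B) = ((G.rhs B).map (rwTau G sm n)).flatten := by
  simp [rwTau, h]

lemma expSeq_rwTau :
    ∀ n (s : GSym nv α), (∀ B, s = Sum.inl B → G.rank B < n) →
      G.expSeq (rwTau G sm n s) = G.exp s := by
  intro n
  induction n using Nat.strong_induction_on with
  | _ n ih =>
    intro s hs
    match s with
    | Sum.inr a => simp
    | Sum.inl B =>
      have hB := hs B rfl
      match n, hB with
      | m + 1, _ =>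
        by_cases h : sm B
        · rw [rwTau_small G sm h]; simp
        · rw [rwTau_big G sm (Bool.eq_false_iff.mpr h)]
          rw [WSLG.expSeq_flatten, List.map_map]
          rw [WSLG.exp_inl]
          unfold WSLG.expSeq
          congr 1
          apply List.map_congr_left
          intro c hc
          exact ih m (by omega) c
            (by rintro C rfl; exact lt_of_lt_of_le (G.rank_lt B C hc) (by omega))

lemma wtSeq_rwTau (n : ℕ) (s : GSym nv α) (hs : ∀ B, s = Sum.inl B → G.rank B < n) :
    G.wtSeq (rwTau G sm n s) = G.wtSym s := by
  simp [WSLG.wtSeq, WSLG.wtSym, expSeq_rwTau G sm n s hs]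

lemma rwTau_ne_nil (n : ℕ) (s : GSym nv α) (hs : ∀ B, s = Sum.inl B → G.rank B < n)
    (h : G.exp s ≠ []) : rwTau G sm n s ≠ [] := by
  intro he
  apply h
  rw [← expSeq_rwTau G sm n s hs, he]
  rfl

lemma mem_rwTau :
    ∀ n (B : Fin nv), G.rank B < n → sm B = false →
      ∀ C : Fin nv, Sum.inl C ∈ rwTau G sm n (Sum.inl B) → sm C = true := by
  intro n
  induction n using Nat.strong_induction_on with
  | _ n ih =>
    intro B hr hsm C hmem
    match n, hr with
    | m + 1, _ =>
      rw [rwTau_big G sm hsm] at hmem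
      simp only [List.mem_flatten, List.mem_map] at hmem
      obtain ⟨l, ⟨c, hc, rfl⟩, hmem⟩ := hmem
      match c with
      | Sum.inr a => simp at hmem
      | Sum.inl D =>
        have hrD : G.rank D < m := lt_of_lt_of_le (G.rank_lt B D hc) (by omega)
        by_cases hD : sm D
        · rw [rwTau_small G sm hD] at hmem
          simp at hmem
          rwa [hmem]
        · exact ih m (by omega) D hrD (Bool.eq_false_iff.mpr hD) C hmem

end RW

lemma c2_arith (d τ W wB S : ℝ) (m₀ : ℕ) (hd1 : 1 ≤ d) (hτ : 1 < τ) (hW : 0 < W)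
    (hwB0 : 0 ≤ wB) (hwBτ : W < wB*τ) (hS0 : 0 ≤ S) (hS1 : S ≤ wB)
    (hS2 : S ≤ (m₀:ℝ)*(wB/2)) :
    d*W + 2*d*τ*S - d*(m₀:ℝ)*W ≤ 2*d*τ*wB - d*W := by
  rcases Nat.lt_or_ge m₀ 2 with h2 | h2
  · rcases Nat.lt_or_ge m₀ 1 with h1 | h1
    · have hm0 : m₀ = 0 := by omega
      subst hm0
      have hSz : S ≤ 0 := by simpa using hS2
      have hS00 : S = 0 := le_antisymm hSz hS0
      rw [hS00]
      push_cast
      nlinarith [mul_pos (by linarith : (0:ℝ) < 2*d) (by linarith : (0:ℝ) < wB*τ - W)]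
    · have hm0 : m₀ = 1 := by omega
      subst hm0
      have hShalf : S ≤ wB/2 := by simpa using hS2
      push_cast
      nlinarith [mul_le_mul_of_nonneg_left hShalf (by positivity : (0:ℝ) ≤ 2*d*τ),
        mul_pos (by linarith : (0:ℝ) < d) (by linarith : (0:ℝ) < wB*τ - W)]
  · have hm2 : (2:ℝ) ≤ (m₀:ℝ) := by exact_mod_cast h2
    nlinarith [mul_le_mul_of_nonneg_left hS1 (by positivity : (0:ℝ) ≤ 2*d*τ),
      mul_nonneg (mul_nonneg (by linarith : (0:ℝ) ≤ (m₀:ℝ) - 2)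
        (by linarith : (0:ℝ) ≤ d)) hW.le]

set_option maxHeartbeats 1600000 in
/-- For a contracting weighted RLSLG `G` with run-length-encoded
right-hand sides of size at most `d`, every variable `A` and real `τ > 1`
admit a sequence `rhs_τ(A)` of symbols of `G` expanding to `exp(A)` such that:
(1) every variable `B` occurring in it satisfies `⟨B⟩ ≤ ⟨A⟩/τ`;
(2) its run-length-encoded size is at most `2dτ`;
(3) every contiguous substring `X` of it with `⟨X⟩ ≤ ⟨A⟩/τ` has
run-length-encoded size at most `2d⌈log₂ τ⌉`. -/
theorem nice_rhs_exists (d : ℕ) (hd : 0 < d) (α : Type) (nv : ℕ)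
    (G : WSLG nv α) (hcontr : G.Contracting)
    (hrle : ∀ A, numRuns (G.rhs A) ≤ d)
    (A : Fin nv) (τ : ℝ) (hτ : 1 < τ) :
    ∃ L : List (GSym nv α),
      G.expSeq L = G.exp (Sum.inl A) ∧
      (∀ B : Fin nv, Sum.inl B ∈ L →
          (G.wtSym (Sum.inl B) : ℝ) ≤ (G.wtSym (Sum.inl A) : ℝ) / τ) ∧
      ((numRuns L : ℝ) ≤ 2 * d * τ) ∧
      (∀ X : List (GSym nv α), X <:+: L →
          (G.wtSeq X : ℝ) ≤ (G.wtSym (Sum.inl A) : ℝ) / τ →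
          (numRuns X : ℝ) ≤ 2 * d * (⌈Real.logb 2 τ⌉ : ℝ)) := by
  classical
  have hτ0 : (0:ℝ) < τ := by linarith
  have hd1 : (1:ℝ) ≤ (d:ℝ) := by exact_mod_cast hd
  set W : ℝ := (G.wtSym (Sum.inl A) : ℝ) with hWdef
  set sm : Fin nv → Bool := fun B => decide ((G.wtSym (Sum.inl B) : ℝ) * τ ≤ W) with hsmdef
  have hsm_true : ∀ B : Fin nv, sm B = true ↔ (G.wtSym (Sum.inl B) : ℝ) * τ ≤ W := by
    intro B; simp [hsmdef]
  have hsm_false : ∀ B : Fin nv, sm B = false ↔ W < (G.wtSym (Sum.inl B) : ℝ) * τ := by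
    intro B; simp [hsmdef]
  have hlog1 : (1:ℝ) ≤ (⌈Real.logb 2 τ⌉ : ℝ) := by
    have h0 : (0:ℝ) < Real.logb 2 τ := Real.logb_pos one_lt_two hτ
    have h2 : (0:ℤ) < ⌈Real.logb 2 τ⌉ := Int.ceil_pos.mpr h0
    exact_mod_cast h2
  by_cases hsmA : sm A = true
  · -- degenerate: the start symbol is already small
    refine ⟨[Sum.inl A], by simp, ?_, ?_, ?_⟩
    · intro B hB
      have hBA : B = A := by simpa using hB
      subst hBA
      rw [le_div_iff₀ hτ0]
      exact (hsm_true B).mp hsmA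
    · have h1 : numRuns ([Sum.inl A] : List (GSym nv α)) = 1 := numRuns_singleton _
      rw [h1]
      push_cast
      nlinarith
    · intro X hX hwX
      have h1 : numRuns X ≤ 1 := le_trans (numRuns_infix_le hX) (by simp)
      have h1' : (numRuns X : ℝ) ≤ 1 := by exact_mod_cast h1
      nlinarith
  · -- main case
    have hsmA' : sm A = false := Bool.eq_false_iff.mpr hsmA
    have hWlt : W < W * τ := by
      have := (hsm_false A).mp hsmA'
      rwa [← hWdef] at this
    have hWnn : (0:ℝ) ≤ W := by rw [hWdef]; positivity
    have hW : (0:ℝ) < W := by nlinarith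
    -- bigness predicate on symbols
    set bigf : GSym nv α → Bool := fun s =>
      match s with
      | Sum.inl C => !sm C
      | Sum.inr _ => false
      with hbigfdef
    have hbig_inl : ∀ C : Fin nv, bigf (Sum.inl C) = !sm C := fun C => rfl
    have hbig_inr : ∀ a : α, bigf (Sum.inr a) = false := fun a => rfl
    -- weight positivity for big variables
    have hbigpos : ∀ C : Fin nv, sm C = false → 0 < G.wtSym (Sum.inl C) := by
      intro C hC
      have h1 := (hsm_false C).mp hC
      have h2 : (0:ℝ) < (G.wtSym (Sum.inl C) : ℝ) := by nlinarith
      exact_mod_cast h2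
    -- nonemptiness of rewritten pieces
    have hne : ∀ (m : ℕ) (c : GSym nv α), (∀ C, c = Sum.inl C → G.rank C < m) →
        rwTau G sm m c ≠ [] := by
      intro m c hc
      match c with
      | Sum.inr a => simp
      | Sum.inl C =>
        by_cases hC : sm C
        · rw [rwTau_small G sm hC]; simp
        · exact rwTau_ne_nil G sm m _ hc
            (G.exp_ne_nil (hbigpos C (Bool.eq_false_iff.mpr hC)))
    -- rank helper
    have hrk : ∀ (B : Fin nv) (c : GSym nv α) (m : ℕ), c ∈ G.rhs B → G.rank B ≤ m →
        (∀ C, c = Sum.inl C → G.rank C < m) := by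
      rintro B c m hc hm C rfl
      exact lt_of_lt_of_le (G.rank_lt B C hc) hm
    -- small symbols are kept verbatim
    have hkeep : ∀ (m : ℕ) (c : GSym nv α), bigf c = false → rwTau G sm m c = [c] := by
      intro m c hc
      match c with
      | Sum.inr a => simp
      | Sum.inl C =>
        rw [hbig_inl] at hc
        exact rwTau_small G sm (by simpa using hc) m
    -- half-weight for big children
    have hhalf : ∀ (B C : Fin nv), Sum.inl C ∈ G.rhs B →
        (G.wtSym (Sum.inl C) : ℝ) ≤ (G.wtSym (Sum.inl B) : ℝ) / 2 := by
      intro B C hC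
      have := hcontr B C hC
      rw [le_div_iff₀ (by norm_num : (0:ℝ) < 2)]
      exact_mod_cast (by omega : 2 * G.wtSym (Sum.inl C) ≤ G.wtSym (Sum.inl B) →
        G.wtSym (Sum.inl C) * 2 ≤ G.wtSym (Sum.inl B)) this
    -- CLAIM C2: run-length bound
    have C2 : ∀ (n : ℕ) (B : Fin nv), G.rank B < n → sm B = false →
        (numRuns (rwTau G sm n (Sum.inl B)) : ℝ) * W
          ≤ 2*d*τ*(G.wtSym (Sum.inl B) : ℝ) - d*W := by
      intro n
      induction n using Nat.strong_induction_on with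
      | _ n ih =>
        intro B hr hsmB
        match n, hr with
        | m + 1, hr =>
          have hm : G.rank B ≤ m := by omega
          rw [rwTau_big G sm hsmB]
          set wB : ℝ := (G.wtSym (Sum.inl B) : ℝ) with hwBdef
          set cost : GSym nv α → ℝ := fun s =>
            if bigf s then 2*d*τ/W * (G.wtSym s : ℝ) + (-(d:ℝ)) else 1 with hcostdef
          have hFL := numRuns_flatten_le (rwTau G sm m) bigf cost (G.rhs B)
            (fun c hc => hne m c (hrk B c m hc hm))
            (fun c _ hc => hkeep m c hc)
            (by
              intro c hc
              match c with
              | Sum.inr a => simp [hcostdef, hbig_inr]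
              | Sum.inl C =>
                by_cases hC : sm C
                · rw [rwTau_small G sm hC, hcostdef]
                  simp [hbig_inl, hC]
                · have hC' : sm C = false := Bool.eq_false_iff.mpr hC
                  have hih := ih m (by omega) C (hrk B _ m hc hm C rfl) hC'
                  rw [hcostdef]
                  simp only [hbig_inl, hC', Bool.not_false, if_true]
                  rw [← sub_eq_add_neg]
                  have heq : 2*d*τ/W * (G.wtSym (Sum.inl C) : ℝ) - (d:ℝ)
                      = (2*d*τ*(G.wtSym (Sum.inl C) : ℝ) - d*W)/W := by
                    field_simp
                  rw [heq, le_div_iff₀ hW]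
                  exact hih)
          obtain ⟨S, hSdef⟩ : ∃ x : ℝ,
              x = ((G.rhs B).map (fun s => if bigf s then (G.wtSym s : ℝ) else 0)).sum :=
            ⟨_, rfl⟩
          obtain ⟨m₀, hm₀def⟩ : ∃ k : ℕ, k = (G.rhs B).countP bigf := ⟨_, rfl⟩
          have hsum : ((G.rhs B).map (fun s => if bigf s then cost s else 0)).sum
              = 2*d*τ/W * S + (-(d:ℝ)) * m₀ := by
            rw [hSdef, hm₀def]

            have := sum_if_affine bigf (fun s => (G.wtSym s : ℝ)) (2*d*τ/W) (-(d:ℝ)) (G.rhs B)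
            rw [← this]
            congr 1
            apply List.map_congr_left
            intro c hc
            by_cases h : bigf c <;> simp [hcostdef, h]
          have hS0 : 0 ≤ S := by
            rw [hSdef]
            exact sum_if_nonneg bigf _ (fun s => by positivity) _
          have hS1 : S ≤ wB := by
            rw [hSdef]
            have h1 : ((G.rhs B).map (fun s => if bigf s then (G.wtSym s : ℝ) else 0)).sum ≤ ((G.rhs B).map (fun s => (G.wtSym s : ℝ))).sum := by
              apply List.sum_le_sum
              intro c hc
              by_cases h : bigf c <;> simp [h]
            have h2 : ((G.rhs B).map (fun s => (G.wtSym s : ℝ))).sum = wB := by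
              rw [hwBdef, G.wtSym_inl, G.wtSeq_eq_sum, Nat.cast_list_sum, List.map_map]
              rfl
            linarith
          have hS2 : S ≤ (m₀ : ℝ) * (wB / 2) := by
            rw [hSdef, hm₀def]
            have h1 : ((G.rhs B).map (fun s => if bigf s then (G.wtSym s : ℝ) else 0)).sum
                ≤ ((G.rhs B).map (fun s => if bigf s then wB/2 else 0)).sum := by
              apply List.sum_le_sum
              intro c hc
              by_cases h : bigf c
              · simp only [h, if_true]
                cases c with
                | inr a => simp [hbig_inr a] at h
                | inl C =>
                  rw [hwBdef]
                  exact hhalf B C hc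
              · simp [h]
            rw [sum_if_const] at h1
            exact h1
          have hnrhs : (numRuns (G.rhs B) : ℝ) ≤ d := by exact_mod_cast hrle B
          have hwBτ : W < wB * τ := (hsm_false B).mp hsmB
          have hwB0 : (0:ℝ) ≤ wB := by positivity
          -- combine
          have hFL2 : (numRuns (((G.rhs B).map (rwTau G sm m)).flatten) : ℝ)
              ≤ d + (2*d*τ/W * S + (-(d:ℝ))*m₀) := by
            rw [hsum] at hFL
            linarith
          have hexp : (d + (2*d*τ/W * S + (-(d:ℝ))*m₀)) * W
              = d*W + 2*d*τ*S - d*(m₀:ℝ)*W := by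
            field_simp
            ring
          have hkey : d*W + 2*d*τ*S - d*(m₀:ℝ)*W ≤ 2*d*τ*wB - d*W :=
            c2_arith d τ W wB S m₀ hd1 hτ hW hwB0 hwBτ hS0 hS1 hS2
          calc (numRuns (((G.rhs B).map (rwTau G sm m)).flatten) : ℝ) * W
              ≤ (d + (2*d*τ/W * S + (-(d:ℝ))*m₀)) * W :=
                mul_le_mul_of_nonneg_right hFL2 hW.le
            _ = d*W + 2*d*τ*S - d*(m₀:ℝ)*W := hexp
            _ ≤ 2*d*τ*wB - d*W := hkey
    -- κ function: ceiling of log₂(τ⟨B⟩/W)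
    obtain ⟨kc, hkdef⟩ : ∃ f : Fin nv → ℤ,
        f = fun B => ⌈Real.logb 2 (τ * (G.wtSym (Sum.inl B) : ℝ) / W)⌉ := ⟨_, rfl⟩
    have harg : ∀ B : Fin nv, sm B = false → 1 < τ * (G.wtSym (Sum.inl B) : ℝ) / W := by
      intro B hB
      have h1 := (hsm_false B).mp hB
      rw [one_lt_div hW]
      linarith
    have hk1 : ∀ B : Fin nv, sm B = false → (1:ℝ) ≤ (kc B : ℝ) := by
      intro B hB
      have h3 : 0 < Real.logb 2 (τ * (G.wtSym (Sum.inl B) : ℝ) / W) :=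
        Real.logb_pos one_lt_two (harg B hB)
      have h4 : 0 < kc B := by rw [hkdef]; exact Int.ceil_pos.mpr h3
      exact_mod_cast h4
    have hkstep : ∀ B C : Fin nv, sm C = false → Sum.inl C ∈ G.rhs B →
        (kc C : ℝ) ≤ (kc B : ℝ) - 1 := by
      intro B C hC hmem
      have hCpos : (0:ℝ) < (G.wtSym (Sum.inl C) : ℝ) := by
        exact_mod_cast hbigpos C hC
      have hhalfC := hhalf B C hmem
      have hBpos : (0:ℝ) < (G.wtSym (Sum.inl B) : ℝ) := by linarith
      have hle : τ * (G.wtSym (Sum.inl C) : ℝ) / W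
          ≤ (τ * (G.wtSym (Sum.inl B) : ℝ) / W) / 2 := by
        rw [div_div, div_le_div_iff₀ hW (by positivity : (0:ℝ) < W * 2)]
        nlinarith [mul_le_mul_of_nonneg_left hhalfC hτ0.le]
      have hBW : (0:ℝ) < τ * (G.wtSym (Sum.inl B) : ℝ) / W :=
        div_pos (mul_pos hτ0 hBpos) hW
      have hlogle : Real.logb 2 (τ * (G.wtSym (Sum.inl C) : ℝ) / W)
          ≤ Real.logb 2 (τ * (G.wtSym (Sum.inl B) : ℝ) / W) - 1 := by
        have hdv : Real.logb 2 ((τ * (G.wtSym (Sum.inl B) : ℝ) / W) / 2)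
            = Real.logb 2 (τ * (G.wtSym (Sum.inl B) : ℝ) / W) - 1 := by
          rw [Real.logb_div (ne_of_gt hBW) (by norm_num), Real.logb_self_eq_one one_lt_two]
        rw [← hdv]
        exact Real.logb_le_logb_of_le one_lt_two (by linarith [harg C hC]) hle
      have hint : kc C ≤ kc B - 1 := by
        rw [hkdef]
        calc ⌈Real.logb 2 (τ * (G.wtSym (Sum.inl C) : ℝ) / W)⌉
            ≤ ⌈Real.logb 2 (τ * (G.wtSym (Sum.inl B) : ℝ) / W) - 1⌉ := Int.ceil_mono hlogle
          _ = ⌈Real.logb 2 (τ * (G.wtSym (Sum.inl B) : ℝ) / W)⌉ - 1 := Int.ceil_sub_one _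
      exact_mod_cast hint
    have hkA : (kc A : ℝ) = (⌈Real.logb 2 τ⌉ : ℝ) := by
      have hAeq : τ * (G.wtSym (Sum.inl A) : ℝ) / W = τ := by
        rw [← hWdef]
        field_simp
      rw [hkdef]
      simp only [hAeq]
    -- smallness from weight bound
    have hsmall : ∀ s : GSym nv α, (G.wtSym s : ℝ) * τ ≤ W → bigf s = false := by
      intro s hs
      cases s with
      | inr a => exact hbig_inr a
      | inl C =>
        rw [hbig_inl, (hsm_true C).mpr hs]
        rfl
    have hwinfix : ∀ {Y Z : List (GSym nv α)}, Y <:+: Z →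
        (G.wtSeq Z : ℝ) * τ ≤ W → (G.wtSeq Y : ℝ) * τ ≤ W := by
      intro Y Z h hw
      have h1 : (G.wtSeq Y : ℝ) ≤ (G.wtSeq Z : ℝ) := by exact_mod_cast G.wtSeq_infix_le h
      nlinarith
    have hinfix_d : ∀ {Y : List (GSym nv α)} (B : Fin nv),
        Y <:+: G.rhs B → (numRuns Y : ℝ) ≤ d := by
      intro Y B h
      exact_mod_cast le_trans (numRuns_infix_le h) (hrle B)
    have hsm_zs : ∀ (m : ℕ) (B : Fin nv) (zs X : List (GSym nv α)), G.rank B ≤ m →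
        zs ⊆ G.rhs B → ((zs.map (rwTau G sm m)).flatten <:+: X) →
        (G.wtSeq X : ℝ) * τ ≤ W → ∀ s ∈ zs, bigf s = false := by
      intro m B zs X hm hsub hinf hw s hs
      apply hsmall
      have hr := hrk B s m (hsub hs) hm
      have h1 : rwTau G sm m s <:+: (zs.map (rwTau G sm m)).flatten :=
        List.infix_of_mem_flatten (List.mem_map_of_mem hs)
      have h2 : (G.wtSeq (rwTau G sm m s) : ℝ) * τ ≤ W := hwinfix (h1.trans hinf) hw
      rwa [wtSeq_rwTau G sm m s hr] at h2
    -- extract big variable from a big symbol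
    have hbigvar : ∀ s : GSym nv α, ¬ bigf s = false →
        ∃ C : Fin nv, s = Sum.inl C ∧ sm C = false := by
      intro s hbs
      have hbs' : bigf s = true := by revert hbs; cases (bigf s) <;> simp
      cases s with
      | inr a => simp [hbig_inr a] at hbs'
      | inl C =>
        refine ⟨C, rfl, ?_⟩
        rw [hbig_inl C] at hbs'
        simpa using hbs'
    -- CLAIM CS: suffixes of rewritings
    have CS : ∀ (n : ℕ) (B : Fin nv), G.rank B < n → sm B = false →
        ∀ X : List (GSym nv α), X <:+ rwTau G sm n (Sum.inl B) →
        (G.wtSeq X : ℝ) * τ ≤ W → (numRuns X : ℝ) ≤ d * (kc B : ℝ) := by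
      intro n
      induction n using Nat.strong_induction_on with
      | _ n ih =>
        intro B hr hsmB X hX hwX
        match n, hr with
        | m + 1, hr =>
          have hm : G.rank B ≤ m := by omega
          have hdk : (d:ℝ) ≤ d * (kc B : ℝ) := by nlinarith [hk1 B hsmB]
          rw [rwTau_big G sm hsmB] at hX
          obtain ⟨zs, X', hXeq, hzs, hlast⟩ :=
            suffix_flatten_decomp (rwTau G sm m) (G.rhs B) X hX
          have hflat_inf : (zs.map (rwTau G sm m)).flatten <:+: X := by
            rw [hXeq]; exact (List.suffix_append X' _).isInfix
          have hzs_small := hsm_zs m B zs X hm hzs.subset hflat_inf hwX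
          have hzs_id : (zs.map (rwTau G sm m)).flatten = zs :=
            flatten_map_id (fun s hs => hkeep m s (hzs_small s hs))
          rw [hzs_id] at hXeq
          rcases hlast with rfl | ⟨s, hszs, hX's⟩
          · rw [hXeq, List.nil_append]
            exact le_trans (hinfix_d B hzs.isInfix) hdk
          · have hsmem : s ∈ G.rhs B := hszs.subset (by simp)
            by_cases hbs : bigf s = false
            · rw [hkeep m s hbs] at hX's
              have hXinf : X <:+: G.rhs B := by
                rcases List.suffix_cons_iff.mp hX's with h | h
                · rw [hXeq, h]
                  simpa using hszs.isInfix
                · rw [hXeq, List.suffix_nil.mp h, List.nil_append]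
                  exact hzs.isInfix
              exact le_trans (hinfix_d B hXinf) hdk
            · obtain ⟨C, rfl, hsmC⟩ := hbigvar s hbs
              have hrC : G.rank C < m := hrk B _ m hsmem hm C rfl
              have hX'w : (G.wtSeq X' : ℝ) * τ ≤ W :=
                hwinfix (by rw [hXeq]; exact (List.prefix_append X' zs).isInfix) hwX
              have hX'r := ih m (by omega) C hrC hsmC X' hX's hX'w
              have hzsd : (numRuns zs : ℝ) ≤ d := hinfix_d B hzs.isInfix
              have happ : (numRuns X : ℝ) ≤ (numRuns X' : ℝ) + (numRuns zs : ℝ) := by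
                rw [hXeq]; exact_mod_cast numRuns_append_le X' zs
              have hmul : (d:ℝ) * (kc C : ℝ) ≤ d * ((kc B : ℝ) - 1) :=
                mul_le_mul_of_nonneg_left (hkstep B C hsmC hsmem) (by linarith)
              nlinarith
    -- CLAIM CP: prefixes of rewritings
    have CP : ∀ (n : ℕ) (B : Fin nv), G.rank B < n → sm B = false →
        ∀ X : List (GSym nv α), X <+: rwTau G sm n (Sum.inl B) →
        (G.wtSeq X : ℝ) * τ ≤ W → (numRuns X : ℝ) ≤ d * (kc B : ℝ) := by
      intro n
      induction n using Nat.strong_induction_on with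
      | _ n ih =>
        intro B hr hsmB X hX hwX
        match n, hr with
        | m + 1, hr =>
          have hm : G.rank B ≤ m := by omega
          have hdk : (d:ℝ) ≤ d * (kc B : ℝ) := by nlinarith [hk1 B hsmB]
          rw [rwTau_big G sm hsmB] at hX
          obtain ⟨ys, X', hXeq, hys, hlast⟩ :=
            prefix_flatten_decomp (rwTau G sm m) (G.rhs B) X hX
          have hflat_inf : (ys.map (rwTau G sm m)).flatten <:+: X := by
            rw [hXeq]; exact (List.prefix_append _ X').isInfix
          have hys_small := hsm_zs m B ys X hm hys.subset hflat_inf hwX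
          have hys_id : (ys.map (rwTau G sm m)).flatten = ys :=
            flatten_map_id (fun s hs => hkeep m s (hys_small s hs))
          rw [hys_id] at hXeq
          rcases hlast with rfl | ⟨s, hys2, hX's⟩
          · rw [hXeq, List.append_nil]
            exact le_trans (hinfix_d B hys.isInfix) hdk
          · have hsmem : s ∈ G.rhs B := hys2.subset (by simp)
            by_cases hbs : bigf s = false
            · rw [hkeep m s hbs] at hX's
              have hXinf : X <:+: G.rhs B := by
                rcases X' with _ | ⟨x, X₃⟩
                · rw [hXeq, List.append_nil]
                  exact hys.isInfix
                · obtain ⟨h1, h2⟩ := List.cons_prefix_cons.mp hX's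
                  rw [hXeq, List.prefix_nil.mp h2, h1]
                  exact hys2.isInfix
              exact le_trans (hinfix_d B hXinf) hdk
            · obtain ⟨C, rfl, hsmC⟩ := hbigvar s hbs
              have hrC : G.rank C < m := hrk B _ m hsmem hm C rfl
              have hX'w : (G.wtSeq X' : ℝ) * τ ≤ W :=
                hwinfix (by rw [hXeq]; exact (List.suffix_append ys X').isInfix) hwX
              have hX'r := ih m (by omega) C hrC hsmC X' hX's hX'w
              have hysd : (numRuns ys : ℝ) ≤ d := hinfix_d B hys.isInfix
              have happ : (numRuns X : ℝ) ≤ (numRuns ys : ℝ) + (numRuns X' : ℝ) := by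
                rw [hXeq]; exact_mod_cast numRuns_append_le ys X'
              have hmul : (d:ℝ) * (kc C : ℝ) ≤ d * ((kc B : ℝ) - 1) :=
                mul_le_mul_of_nonneg_left (hkstep B C hsmC hsmem) (by linarith)
              nlinarith
    -- CLAIM CI: infixes of rewritings
    have CI : ∀ (n : ℕ) (B : Fin nv), G.rank B < n → sm B = false →
        ∀ X : List (GSym nv α), X <:+: rwTau G sm n (Sum.inl B) →
        (G.wtSeq X : ℝ) * τ ≤ W → (numRuns X : ℝ) ≤ 2 * d * (kc B : ℝ) - d := by
      intro n
      induction n using Nat.strong_induction_on with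
      | _ n ih =>
        intro B hr hsmB X hX hwX
        match n, hr with
        | m + 1, hr =>
          have hm : G.rank B ≤ m := by omega
          have hkB := hk1 B hsmB
          have hdk : (d:ℝ) ≤ 2 * d * (kc B : ℝ) - d := by nlinarith
          have hdk2 : (d:ℝ) * (kc B : ℝ) ≤ 2 * d * (kc B : ℝ) - d := by nlinarith
          rw [rwTau_big G sm hsmB] at hX
          obtain ⟨SS, hXS, hSsuf⟩ := List.infix_iff_prefix_suffix.mp hX
          obtain ⟨zs, X', hSeq, hzs, hlast⟩ :=
            suffix_flatten_decomp (rwTau G sm m) (G.rhs B) SS hSsuf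
          rw [hSeq] at hXS
          obtain ⟨t, ht⟩ := hXS
          rcases List.append_eq_append_iff.mp ht with ⟨a', h1, h2⟩ | ⟨c', h1, h2⟩
          · -- X is a prefix of X'
            have hXX' : X <+: X' := ⟨a', h1.symm⟩
            rcases hlast with rfl | ⟨s, hszs, hX's⟩
            · rw [List.prefix_nil.mp hXX']
              rw [numRuns_nil]
              push_cast
              linarith
            · have hXinf : X <:+: rwTau G sm m s :=
                List.infix_iff_prefix_suffix.mpr ⟨X', hXX', hX's⟩
              have hsmem : s ∈ G.rhs B := hszs.subset (by simp)
              by_cases hbs : bigf s = false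
              · rw [hkeep m s hbs] at hXinf
                have hX1 : (numRuns X : ℝ) ≤ 1 := by
                  exact_mod_cast le_trans (numRuns_infix_le hXinf) (by simp)
                linarith
              · obtain ⟨C, rfl, hsmC⟩ := hbigvar s hbs
                have hrC : G.rank C < m := hrk B _ m hsmem hm C rfl
                have hXr := ih m (by omega) C hrC hsmC X hXinf hwX
                have hmul : 2 * (d:ℝ) * (kc C : ℝ) ≤ 2 * d * ((kc B : ℝ) - 1) :=
                  mul_le_mul_of_nonneg_left (hkstep B C hsmC hsmem) (by linarith)
                nlinarith
          · -- X = X' ++ c' with c' a prefix of the flattening of zs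
            have hc' : c' <+: (zs.map (rwTau G sm m)).flatten := ⟨t, h2.symm⟩
            obtain ⟨ys, X'', hceq, hys, hlast2⟩ :=
              prefix_flatten_decomp (rwTau G sm m) zs c' hc'
            have hysub : ys ⊆ G.rhs B := fun x hx => hzs.subset (hys.subset hx)
            have hXfull : X = X' ++ ((ys.map (rwTau G sm m)).flatten ++ X'') := by
              rw [h1, hceq]
            have hflat_inf : (ys.map (rwTau G sm m)).flatten <:+: X :=
              ⟨X', X'', by rw [hXfull, List.append_assoc]⟩
            have hys_small := hsm_zs m B ys X hm hysub hflat_inf hwX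
            have hys_id : (ys.map (rwTau G sm m)).flatten = ys :=
              flatten_map_id (fun s hs => hkeep m s (hys_small s hs))
            rw [hys_id] at hXfull
            -- weight bounds for the two extreme parts
            have hwX' : (G.wtSeq X' : ℝ) * τ ≤ W :=
              hwinfix (by rw [hXfull]; exact (List.prefix_append X' _).isInfix) hwX
            have hwX'' : (G.wtSeq X'' : ℝ) * τ ≤ W :=
              hwinfix (by
                rw [hXfull, ← List.append_assoc]
                exact (List.suffix_append (X' ++ ys) X'').isInfix) hwX
            -- trichotomy for the left part
            have hL : (∀ zz : List (GSym nv α), zz <+: zs → (X' ++ zz) <:+: G.rhs B) ∨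
                (∃ C : Fin nv, sm C = false ∧ Sum.inl C ∈ G.rhs B ∧
                  X' <:+ rwTau G sm m (Sum.inl C)) := by
              rcases hlast with rfl | ⟨s, hszs, hX's⟩
              · left
                intro zz hzz
                rw [List.nil_append]
                exact hzz.isInfix.trans hzs.isInfix
              · have hsmem : s ∈ G.rhs B := hszs.subset (by simp)
                by_cases hbs : bigf s = false
                · left
                  intro zz hzz
                  rw [hkeep m s hbs] at hX's
                  rcases List.suffix_cons_iff.mp hX's with h | h
                  · rw [h]
                    have h2 : s :: zz <+: s :: zs := List.cons_prefix_cons.mpr ⟨rfl, hzz⟩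
                    simpa using h2.isInfix.trans hszs.isInfix
                  · rw [List.suffix_nil.mp h, List.nil_append]
                    exact hzz.isInfix.trans hzs.isInfix
                · obtain ⟨C, rfl, hsmC⟩ := hbigvar s hbs
                  exact Or.inr ⟨C, hsmC, hsmem, hX's⟩
            -- dichotomy for the right part
            have hR : ((ys ++ X'') <+: zs) ∨
                (∃ C : Fin nv, sm C = false ∧ Sum.inl C ∈ G.rhs B ∧
                  X'' <+: rwTau G sm m (Sum.inl C)) := by
              rcases hlast2 with rfl | ⟨s₂, hys2, hX''s⟩
              · left
                rw [List.append_nil]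
                exact hys
              · have hsmem2 : s₂ ∈ G.rhs B := hzs.subset (hys2.subset (by simp))
                by_cases hbs : bigf s₂ = false
                · left
                  rw [hkeep m s₂ hbs] at hX''s
                  match X'', hX''s with
                  | [], _ =>
                    rw [List.append_nil]
                    exact hys
                  | x :: X₃, hx =>
                    obtain ⟨he, h2⟩ := List.cons_prefix_cons.mp hx
                    rw [List.prefix_nil.mp h2, he]
                    exact hys2
                · obtain ⟨C, rfl, hsmC⟩ := hbigvar s₂ hbs
                  exact Or.inr ⟨C, hsmC, hsmem2, hX''s⟩
            -- combine the four cases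
            have hysinf : (numRuns ys : ℝ) ≤ d :=
              hinfix_d B ((hys.isInfix).trans hzs.isInfix)
            rcases hL with hLs | ⟨C, hsmC, hCmem, hX'C⟩
            · rcases hR with hRs | ⟨C₂, hsmC₂, hC₂mem, hX''C₂⟩
              · -- both extreme parts small: X is an infix of rhs B
                have hXinf : X <:+: G.rhs B := hXfull ▸ hLs (ys ++ X'') hRs
                linarith [hinfix_d B hXinf]
              · -- left small, right big
                have hx1 : (numRuns (X' ++ ys) : ℝ) ≤ d := hinfix_d B (hLs ys hys)
                have hrC₂ : G.rank C₂ < m := hrk B _ m hC₂mem hm C₂ rfl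
                have hx2 := CP m C₂ hrC₂ hsmC₂ X'' hX''C₂ hwX''
                have hmul : (d:ℝ) * (kc C₂ : ℝ) ≤ d * ((kc B : ℝ) - 1) :=
                  mul_le_mul_of_nonneg_left (hkstep B C₂ hsmC₂ hC₂mem) (by linarith)
                have happ : (numRuns X : ℝ)
                    ≤ (numRuns (X' ++ ys) : ℝ) + (numRuns X'' : ℝ) := by
                  rw [hXfull, ← List.append_assoc]
                  exact_mod_cast numRuns_append_le (X' ++ ys) X''
                nlinarith
            · rcases hR with hRs | ⟨C₂, hsmC₂, hC₂mem, hX''C₂⟩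
              · -- left big, right small
                have hrC : G.rank C < m := hrk B _ m hCmem hm C rfl
                have hx1 := CS m C hrC hsmC X' hX'C hwX'
                have hx2 : (numRuns (ys ++ X'') : ℝ) ≤ d :=
                  hinfix_d B (hRs.isInfix.trans hzs.isInfix)
                have hmul : (d:ℝ) * (kc C : ℝ) ≤ d * ((kc B : ℝ) - 1) :=
                  mul_le_mul_of_nonneg_left (hkstep B C hsmC hCmem) (by linarith)
                have happ : (numRuns X : ℝ)
                    ≤ (numRuns X' : ℝ) + (numRuns (ys ++ X'') : ℝ) := by
                  rw [hXfull]
                  exact_mod_cast numRuns_append_le X' (ys ++ X'')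
                nlinarith
              · -- both big
                have hrC : G.rank C < m := hrk B _ m hCmem hm C rfl
                have hrC₂ : G.rank C₂ < m := hrk B _ m hC₂mem hm C₂ rfl
                have hx1 := CS m C hrC hsmC X' hX'C hwX'
                have hx3 := CP m C₂ hrC₂ hsmC₂ X'' hX''C₂ hwX''
                have hmul : (d:ℝ) * (kc C : ℝ) ≤ d * ((kc B : ℝ) - 1) :=
                  mul_le_mul_of_nonneg_left (hkstep B C hsmC hCmem) (by linarith)
                have hmul₂ : (d:ℝ) * (kc C₂ : ℝ) ≤ d * ((kc B : ℝ) - 1) :=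
                  mul_le_mul_of_nonneg_left (hkstep B C₂ hsmC₂ hC₂mem) (by linarith)
                have happ : (numRuns X : ℝ) ≤ (numRuns X' : ℝ)
                    + ((numRuns ys : ℝ) + (numRuns X'' : ℝ)) := by
                  rw [hXfull]
                  have t1 : numRuns (X' ++ (ys ++ X'')) ≤ numRuns X' + numRuns (ys ++ X'') :=
                    numRuns_append_le X' (ys ++ X'')
                  have t2 : numRuns (ys ++ X'') ≤ numRuns ys + numRuns X'' :=
                    numRuns_append_le ys X''
                  push_cast
                  exact_mod_cast le_trans t1 (by omega)
                nlinarith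
    -- FINAL ASSEMBLY
    refine ⟨rwTau G sm (G.rank A + 1) (Sum.inl A), ?_, ?_, ?_, ?_⟩
    · exact expSeq_rwTau G sm _ _ (by intro B hB; injection hB with h; subst h; omega)
    · intro B hB
      have hsmB := mem_rwTau G sm (G.rank A + 1) A (by omega) hsmA' B hB
      rw [le_div_iff₀ hτ0]
      exact (hsm_true B).mp hsmB
    · have h := C2 (G.rank A + 1) A (by omega) hsmA'
      rw [← hWdef] at h
      have h2 : (numRuns (rwTau G sm (G.rank A + 1) (Sum.inl A)) : ℝ) * W
          ≤ (2*d*τ - d) * W := by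
        calc (numRuns (rwTau G sm (G.rank A + 1) (Sum.inl A)) : ℝ) * W
            ≤ 2*d*τ*W - d*W := h
          _ = (2*d*τ - d) * W := by ring
      have h3 := le_of_mul_le_mul_right h2 hW
      linarith
    · intro X hX hwX
      have hw' : (G.wtSeq X : ℝ) * τ ≤ W := by
        rw [le_div_iff₀ hτ0] at hwX
        exact hwX
      have h := CI (G.rank A + 1) A (by omega) hsmA' X hX hw'
      rw [hkA] at h
      linarith
end

section
/- Let P, Q, B ∈ ℤ>0. For every function T : [PQ] → 2^{[B]}, there exists an unweighted SLG of size at most 5PQB producing a binary string V of length Q·B^P such that, for every function S : [PQ] → [B], one has: there exists q ∈ [Q] with V[q·B^P + ∑_{p∈[P]} S(qP+p)·B^p] = 1 if and only if there exists i ∈ [PQ] with S(i) ∈ T(i). -/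
open scoped BigOperators

namespace WSLG
variable {nv : ℕ} {α : Type}

lemma expandFuel_inr (G : WSLG nv α) (n : ℕ) (a : α) :
    G.expandFuel n (Sum.inr a) = [a] := by cases n <;> rfl

lemma expandFuel_stable (G : WSLG nv α) :
    ∀ (r : ℕ) (A : Fin nv) (n m : ℕ), G.rank A ≤ r → G.rank A < n → G.rank A < m →
      G.expandFuel n (Sum.inl A) = G.expandFuel m (Sum.inl A) := by
  intro r
  induction r with
  | zero =>
    intro A n m hr hn hm
    obtain ⟨n, rfl⟩ := Nat.exists_eq_succ_of_ne_zero (by omega : n ≠ 0)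
    obtain ⟨m, rfl⟩ := Nat.exists_eq_succ_of_ne_zero (by omega : m ≠ 0)
    simp only [expandFuel]
    congr 1
    apply List.map_congr_left
    intro s hs
    match s with
    | Sum.inr a => rw [G.expandFuel_inr, G.expandFuel_inr]
    | Sum.inl C => exact absurd (G.rank_lt _ _ hs) (by omega)
  | succ r ih =>
    intro A n m hr hn hm
    obtain ⟨n, rfl⟩ := Nat.exists_eq_succ_of_ne_zero (by omega : n ≠ 0)
    obtain ⟨m, rfl⟩ := Nat.exists_eq_succ_of_ne_zero (by omega : m ≠ 0)
    simp only [expandFuel]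
    congr 1
    apply List.map_congr_left
    intro s hs
    match s with
    | Sum.inr a => rw [G.expandFuel_inr, G.expandFuel_inr]
    | Sum.inl C =>
      have h := G.rank_lt _ _ hs
      exact ih C n m (by omega) (by omega) (by omega)

lemma exp_expSeq (G : WSLG nv α) (A : Fin nv) :
    G.exp (Sum.inl A) = G.expSeq (G.rhs A) := by
  show G.expandFuel (G.rank A + 1) (Sum.inl A) = _
  simp only [expandFuel, expSeq]
  congr 1
  apply List.map_congr_left
  intro s hs
  match s with
  | Sum.inr a => rw [G.expandFuel_inr]; rfl
  | Sum.inl C =>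
    have h := G.rank_lt _ _ hs
    exact G.expandFuel_stable (G.rank C) C _ _ le_rfl (by omega) (by omega)

end WSLG

/-- The index `qP + p ∈ [PQ]` of the `p`-th block inside the `q`-th part. -/
def blockIdx {P Q : ℕ} (q : Fin Q) (p : Fin P) : Fin (P * Q) :=
  ⟨(q : ℕ) * P + (p : ℕ), by
    have hq := q.isLt
    have hp := p.isLt
    have h1 : (q : ℕ) * P + (p : ℕ) < ((q : ℕ) + 1) * P := by
      rw [Nat.add_mul, Nat.one_mul]; omega
    have h2 : ((q : ℕ) + 1) * P ≤ Q * P := Nat.mul_le_mul_right P hq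
    have h3 : Q * P = P * Q := Nat.mul_comm Q P
    omega⟩


section BLSDConstruction

/-- List-level helper: `getD` of a flatten of constant-length lists. -/
lemma getD_flatten_const {γ : Type*} (d : γ) :
    ∀ (L : List (List γ)) (m i r : ℕ), (∀ l ∈ L, l.length = m) →
      i < L.length → r < m →
      L.flatten.getD (i * m + r) d = (L.getD i []).getD r d := by
  intro L
  induction L with
  | nil => intro m i r _ hi _; simp at hi
  | cons l Ls ih =>
    intro m i r hlen hi hr
    have hl : l.length = m := hlen l (by simp)
    cases i with
    | zero =>
      rw [List.flatten_cons, Nat.zero_mul, Nat.zero_add,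
        List.getD_append _ _ _ _ (by omega)]
      rfl
    | succ i =>
      have harith : (i + 1) * m + r = l.length + (i * m + r) := by
        rw [hl]; ring
      rw [List.flatten_cons, harith, List.getD_append_right _ _ _ _ (by omega)]
      have : l.length + (i * m + r) - l.length = i * m + r := by omega
      rw [this, ih m i r (fun l' hl' => hlen l' (by simp [hl'])) (by simpa using hi) hr]
      rfl

lemma getD_replicate' {γ : Type*} (a d : γ) (n r : ℕ) (h : r < n) :
    (List.replicate n a).getD r d = a := by
  rw [List.getD_eq_getElem _ _ (by simpa using h)]
  exact List.getElem_replicate ..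

lemma flatten_replicate_replicate {γ : Type*} (a : γ) :
    ∀ m n : ℕ, (List.replicate m (List.replicate n a)).flatten
      = List.replicate (m * n) a := by
  intro m
  induction m with
  | zero => simp
  | succ m ih =>
    intro n
    rw [List.replicate_succ, List.flatten_cons, ih n,
      show (m + 1) * n = n + m * n by ring, List.replicate_add]

variable (P Q B : ℕ)

/-- Variable indices: `A q k` blocks, `Ones k` blocks, and the start symbol. -/
abbrev BLSDVI := (Fin Q × Fin (P + 1)) ⊕ Fin P ⊕ Unit

noncomputable def bEquiv : BLSDVI P Q ≃ Fin (Fintype.card (BLSDVI P Q)) :=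
  Fintype.equivFin _

variable (T : Fin (P * Q) → Finset (Fin B))

/-- Totalized version of `T`, indexed by naturals. -/
def totT (q k : ℕ) : Finset (Fin B) :=
  if h : q < Q ∧ k < P then T (blockIdx ⟨q, h.1⟩ ⟨k, h.2⟩) else ∅

/-- All-ones string of length `B^k`. -/
def onesStr (k : ℕ) : List (Fin 2) := List.replicate (B ^ k) 1

/-- Intended expansion of the variable `A q k`. -/
def Aexp (q : ℕ) : ℕ → List (Fin 2)
  | 0 => [0]
  | k + 1 => ((List.finRange B).map fun x =>
      if x ∈ totT P Q B T q k then onesStr B k else Aexp q k).flatten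

/-- Intended expansion of the start symbol. -/
def Vexp : List (Fin 2) := ((List.range Q).map fun q => Aexp P Q B T q P).flatten

/-- Right-hand sides of the grammar, over `BLSDVI` indices. -/
noncomputable def bRhs : BLSDVI P Q → List (GSym (Fintype.card (BLSDVI P Q)) (Fin 2))
  | Sum.inl (_, ⟨0, _⟩) => [Sum.inr 0]
  | Sum.inl (q, ⟨k + 1, hk'⟩) => (List.finRange B).map fun x =>
      if x ∈ totT P Q B T (q : ℕ) k then
        Sum.inl (bEquiv P Q (Sum.inr (Sum.inl ⟨k, by omega⟩)))
      else Sum.inl (bEquiv P Q (Sum.inl (q, ⟨k, by omega⟩)))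
  | Sum.inr (Sum.inl ⟨0, _⟩) => [Sum.inr 1]
  | Sum.inr (Sum.inl ⟨k + 1, hk⟩) =>
      List.replicate B (Sum.inl (bEquiv P Q (Sum.inr (Sum.inl ⟨k, by omega⟩))))
  | Sum.inr (Sum.inr _) => (List.finRange Q).map fun q =>
      Sum.inl (bEquiv P Q (Sum.inl (q, Fin.last P)))

def bRank : BLSDVI P Q → ℕ
  | Sum.inl (_, k) => (k : ℕ)
  | Sum.inr (Sum.inl k) => (k : ℕ)
  | Sum.inr (Sum.inr _) => P + 1

lemma bRank_lt (vi : BLSDVI P Q) (C : Fin (Fintype.card (BLSDVI P Q)))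
    (h : Sum.inl C ∈ bRhs P Q B T vi) :
    bRank P Q ((bEquiv P Q).symm C) < bRank P Q vi := by
  rcases vi with ⟨q, ⟨k, hk⟩⟩ | ⟨k, hk⟩ | u
  · cases k with
    | zero => simp [bRhs] at h
    | succ k =>
      simp only [bRhs, List.mem_map] at h
      obtain ⟨x, -, hx⟩ := h
      split at hx <;>
      · rw [Sum.inl.injEq] at hx
        rw [← hx, Equiv.symm_apply_apply]
        simp only [bRank]
        omega
  · cases k with
    | zero => simp [bRhs] at h
    | succ k =>
      simp only [bRhs, List.mem_replicate] at h
      rw [Sum.inl.injEq] at h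
      rw [h.2, Equiv.symm_apply_apply]
      simp only [bRank]
      omega
  · simp only [bRhs, List.mem_map] at h
    obtain ⟨q, -, hx⟩ := h
    rw [Sum.inl.injEq] at hx
    rw [← hx, Equiv.symm_apply_apply]
    simp only [bRank, Fin.val_last]
    omega

/-- The grammar. -/
noncomputable def bG : WSLG (Fintype.card (BLSDVI P Q)) (Fin 2) where
  rhs v := bRhs P Q B T ((bEquiv P Q).symm v)
  start := Sum.inl (bEquiv P Q (Sum.inr (Sum.inr ())))
  wt _ := 1
  wt_pos _ := le_refl 1
  rank v := bRank P Q ((bEquiv P Q).symm v)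
  rank_lt A C h := bRank_lt P Q B T _ C h

lemma bG_exp_vi (vi : BLSDVI P Q) :
    (bG P Q B T).exp (Sum.inl (bEquiv P Q vi))
      = (bG P Q B T).expSeq (bRhs P Q B T vi) := by
  rw [WSLG.exp_expSeq]
  simp only [bG, Equiv.symm_apply_apply]

lemma bG_exp_ones (hP : 0 < P) :
    ∀ (k : ℕ) (h : k < P),
      (bG P Q B T).exp (Sum.inl (bEquiv P Q (Sum.inr (Sum.inl ⟨k, h⟩))))
        = onesStr B k := by
  intro k
  induction k with
  | zero =>
    intro h
    rw [bG_exp_vi]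
    simp [bRhs, WSLG.expSeq, WSLG.exp, onesStr]
  | succ k ih =>
    intro h
    rw [bG_exp_vi]
    simp only [bRhs]
    rw [WSLG.expSeq, List.map_replicate, ih (by omega)]
    simp only [onesStr]
    rw [flatten_replicate_replicate, show B * B ^ k = B ^ (k + 1) by ring]

lemma bG_exp_A (hP : 0 < P) :
    ∀ (k : ℕ) (h : k ≤ P) (q : Fin Q),
      (bG P Q B T).exp (Sum.inl (bEquiv P Q (Sum.inl (q, ⟨k, by omega⟩))))
        = Aexp P Q B T (q : ℕ) k := by
  intro k
  induction k with
  | zero =>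
    intro h q
    rw [bG_exp_vi]
    simp [bRhs, WSLG.expSeq, WSLG.exp, Aexp]
  | succ k ih =>
    intro h q
    rw [bG_exp_vi]
    simp only [bRhs]
    rw [WSLG.expSeq, List.map_map, Aexp]
    congr 1
    apply List.map_congr_left
    intro x _
    simp only [Function.comp]
    rw [apply_ite ((bG P Q B T).exp)]
    by_cases hx : x ∈ totT P Q B T (q : ℕ) k
    · rw [if_pos hx, if_pos hx, bG_exp_ones P Q B T hP k (by omega)]
    · rw [if_neg hx, if_neg hx, ih (by omega) q]

lemma Aexp_length (q : ℕ) : ∀ k, (Aexp P Q B T q k).length = B ^ k := by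
  intro k
  induction k with
  | zero => simp [Aexp]
  | succ k ih =>
    simp only [Aexp, List.length_flatten, List.map_map]
    have hc : ∀ x ∈ List.finRange B,
        (List.length ∘ fun x =>
          if x ∈ totT P Q B T q k then onesStr B k else Aexp P Q B T q k) x = B ^ k := by
      intro x _
      simp only [Function.comp]
      split
      · simp [onesStr]
      · exact ih
    rw [List.map_congr_left hc, List.map_const', List.sum_replicate, smul_eq_mul,
      List.length_finRange, show B * B ^ k = B ^ (k + 1) by ring]

lemma digit_sum_lt (x : ℕ → Fin B) : ∀ k, (∑ p ∈ Finset.range k, (x p : ℕ) * B ^ p) < B ^ k := by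
  intro k
  have hB0 : 0 < B := (x 0).pos
  induction k with
  | zero => simp
  | succ k ih =>
    rw [Finset.sum_range_succ]
    have h1 : (x k : ℕ) * B ^ k ≤ (B - 1) * B ^ k :=
      Nat.mul_le_mul_right _ (by have := (x k).isLt; omega)
    have h2 : (B - 1) * B ^ k + B ^ k = B ^ (k + 1) := by
      have : (B - 1) * B ^ k + B ^ k = ((B - 1) + 1) * B ^ k := by ring
      rw [this, show B - 1 + 1 = B by omega, show B * B ^ k = B ^ (k + 1) by ring]
    omega

lemma Aexp_getD (q : ℕ) (x : ℕ → Fin B) :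
    ∀ k, ((Aexp P Q B T q k).getD (∑ p ∈ Finset.range k, (x p : ℕ) * B ^ p) 0 = 1
      ↔ ∃ p, p < k ∧ x p ∈ totT P Q B T q p) := by
  intro k
  induction k with
  | zero => simp [Aexp, List.getD]
  | succ k ih =>
    have hidx : (∑ p ∈ Finset.range (k + 1), (x p : ℕ) * B ^ p)
        = ((x k : ℕ)) * B ^ k + ∑ p ∈ Finset.range k, (x p : ℕ) * B ^ p := by
      rw [Finset.sum_range_succ]; ring
    rw [hidx]
    set L := (List.finRange B).map fun y =>
      if y ∈ totT P Q B T q k then onesStr B k else Aexp P Q B T q k with hL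
    have hlen : ∀ l ∈ L, l.length = B ^ k := by
      intro l hl
      rw [hL, List.mem_map] at hl
      obtain ⟨y, -, rfl⟩ := hl
      split
      · simp [onesStr]
      · exact Aexp_length P Q B T q k
    have hiL : ((x k) : ℕ) < L.length := by
      rw [hL]; simpa using (x k).isLt
    have hgetD : L.getD ((x k) : ℕ) [] =
        if x k ∈ totT P Q B T q k then onesStr B k else Aexp P Q B T q k := by
      rw [List.getD_eq_getElem _ _ hiL]
      simp [hL, List.getElem_finRange]
    rw [show Aexp P Q B T q (k + 1) = L.flatten from rfl,
      getD_flatten_const _ L (B ^ k) ((x k) : ℕ) _ hlen hiL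
        (digit_sum_lt B x k), hgetD]
    by_cases hx : x k ∈ totT P Q B T q k
    · rw [if_pos hx, onesStr, getD_replicate' _ _ _ _ (digit_sum_lt B x k)]
      constructor
      · intro _; exact ⟨k, by omega, hx⟩
      · intro _; rfl
    · rw [if_neg hx, ih]
      constructor
      · rintro ⟨p, hp, hmem⟩
        exact ⟨p, by omega, hmem⟩
      · rintro ⟨p, hp, hmem⟩
        refine ⟨p, ?_, hmem⟩
        have : p ≠ k := fun h => hx (h ▸ hmem)
        omega

lemma Vexp_length : (Vexp P Q B T).length = Q * B ^ P := by
  simp only [Vexp, List.length_flatten, List.map_map]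
  have hc : ∀ y ∈ List.range Q,
      (List.length ∘ fun q => Aexp P Q B T q P) y = B ^ P :=
    fun y _ => Aexp_length P Q B T y P
  rw [List.map_congr_left hc, List.map_const', List.sum_replicate, smul_eq_mul,
    List.length_range]

lemma Vexp_getD (q : Fin Q) (r : ℕ) (hr : r < B ^ P) :
    (Vexp P Q B T).getD ((q : ℕ) * B ^ P + r) 0 = (Aexp P Q B T (q : ℕ) P).getD r 0 := by
  have hlen : ∀ l ∈ (List.range Q).map fun q => Aexp P Q B T q P, l.length = B ^ P := by
    intro l hl
    rw [List.mem_map] at hl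
    obtain ⟨y, -, rfl⟩ := hl
    exact Aexp_length P Q B T y P
  have hiL : (q : ℕ) < ((List.range Q).map fun q => Aexp P Q B T q P).length := by
    simpa using q.isLt
  rw [Vexp, getD_flatten_const _ _ (B ^ P) (q : ℕ) r hlen hiL hr]
  congr 1
  rw [List.getD_eq_getElem _ _ hiL]
  simp

lemma bG_exp_start (hP : 0 < P) :
    (bG P Q B T).exp ((bG P Q B T).start) = Vexp P Q B T := by
  show (bG P Q B T).exp (Sum.inl (bEquiv P Q (Sum.inr (Sum.inr ())))) = _
  rw [bG_exp_vi]
  simp only [bRhs]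
  rw [WSLG.expSeq, List.map_map]
  have hc : ∀ q ∈ List.finRange Q,
      ((bG P Q B T).exp ∘ fun q =>
        (Sum.inl (bEquiv P Q (Sum.inl (q, Fin.last P))) :
          GSym (Fintype.card (BLSDVI P Q)) (Fin 2))) q = Aexp P Q B T (q : ℕ) P :=
    fun q _ => bG_exp_A P Q B T hP P le_rfl q
  rw [List.map_congr_left hc, Vexp]
  congr 1
  rw [show (fun q : Fin Q => Aexp P Q B T (q : ℕ) P)
      = (fun n => Aexp P Q B T n P) ∘ Fin.val from rfl,
    ← List.map_map,
    (List.ext_getElem (by simp) (by simp) : List.map Fin.val (List.finRange Q) = List.range Q)]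

lemma bG_size (hP : 0 < P) (hQ : 0 < Q) (hB : 0 < B) :
    (bG P Q B T).size ≤ 5 * P * Q * B := by
  have hsum : (bG P Q B T).size = ∑ vi : BLSDVI P Q, (bRhs P Q B T vi).length := by
    rw [WSLG.size]
    exact (Fintype.sum_equiv (bEquiv P Q) (fun vi => (bRhs P Q B T vi).length)
      (fun v => (bRhs P Q B T ((bEquiv P Q).symm v)).length)
      (fun vi => by simp only [Equiv.symm_apply_apply])).symm
  rw [hsum, Fintype.sum_sum_type, Fintype.sum_sum_type, Fintype.sum_prod_type]
  have hA : ∀ (q : Fin Q) (k : Fin (P + 1)),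
      (bRhs P Q B T (Sum.inl (q, k))).length = if (k : ℕ) = 0 then 1 else B := by
    rintro q ⟨k, hk⟩
    cases k <;> simp [bRhs]
  have hO : ∀ k : Fin P,
      (bRhs P Q B T (Sum.inr (Sum.inl k))).length ≤ B := by
    rintro ⟨k, hk⟩
    cases k <;> simp [bRhs] <;> omega
  have hS : ∀ u : Unit, (bRhs P Q B T (Sum.inr (Sum.inr u))).length = Q := by
    intro u; simp [bRhs]
  have hAk : ∑ k : Fin (P + 1), (if (k : ℕ) = 0 then (1 : ℕ) else B) = 1 + P * B := by
    rw [Fin.sum_univ_eq_sum_range (fun k => if k = 0 then (1 : ℕ) else B) (P + 1),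
      Finset.sum_range_succ']
    rw [Finset.sum_congr rfl (fun i _ => if_neg (Nat.succ_ne_zero i)), if_pos rfl,
      Finset.sum_const, Finset.card_range, smul_eq_mul]
    omega
  have h1 : ∑ q : Fin Q, ∑ k : Fin (P + 1), (bRhs P Q B T (Sum.inl (q, k))).length
      = Q * (1 + P * B) := by
    rw [Finset.sum_congr rfl (fun q _ => by
      rw [Finset.sum_congr rfl (fun k _ => hA q k), hAk]), Finset.sum_const,
      Finset.card_univ, Fintype.card_fin, smul_eq_mul]
  have h2 : ∑ k : Fin P, (bRhs P Q B T (Sum.inr (Sum.inl k))).length ≤ P * B := by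
    calc ∑ k : Fin P, (bRhs P Q B T (Sum.inr (Sum.inl k))).length
        ≤ ∑ _k : Fin P, B := Finset.sum_le_sum (fun k _ => hO k)
      _ = P * B := by rw [Finset.sum_const, Finset.card_univ, Fintype.card_fin, smul_eq_mul]
  have h3 : ∑ u : Unit, (bRhs P Q B T (Sum.inr (Sum.inr u))).length = Q := by
    simp [hS]
  rw [h1, h3]
  have hQle : Q ≤ P * Q * B := by
    calc Q = 1 * Q * 1 := by ring
      _ ≤ P * Q * B := Nat.mul_le_mul (Nat.mul_le_mul hP le_rfl) hB
  have hPBle : P * B ≤ P * Q * B := by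
    calc P * B = P * 1 * B := by ring
      _ ≤ P * Q * B := Nat.mul_le_mul (Nat.mul_le_mul le_rfl hQ) le_rfl
  have hexp : Q * (1 + P * B) = Q + Q * (P * B) := by ring
  have hQPB : Q * (P * B) = P * Q * B := by ring
  have h5 : 5 * P * Q * B = 5 * (P * Q * B) := by ring
  rw [h5]
  omega

end BLSDConstruction

/-- For every function `T : [PQ] → 2^[B]` there exists an
unweighted SLG of size at most `5PQB` producing a binary string `V` of length
`Q·B^P` such that, for every `S : [PQ] → [B]`, there exists `q ∈ [Q]` with
`V[q·B^P + ∑_p S(qP+p)·B^p] = 1` iff there exists `i ∈ [PQ]` with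
`S(i) ∈ T(i)`. -/
theorem blsd_split_encoding (P Q B : ℕ) (hP : 0 < P) (hQ : 0 < Q) (hB : 0 < B)
    (T : Fin (P * Q) → Finset (Fin B)) :
    ∃ (nv : ℕ) (G : WSLG nv (Fin 2)),
      G.Unweighted ∧ G.size ≤ 5 * P * Q * B ∧
      (G.exp G.start).length = Q * B ^ P ∧
      ∀ S : Fin (P * Q) → Fin B,
        ((∃ q : Fin Q, (G.exp G.start).getD
            ((q : ℕ) * B ^ P + ∑ p : Fin P, (S (blockIdx q p) : ℕ) * B ^ (p : ℕ)) 0 = 1)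
          ↔ ∃ i : Fin (P * Q), S i ∈ T i) := by
  refine ⟨Fintype.card (BLSDVI P Q), bG P Q B T, fun a => rfl,
    bG_size P Q B T hP hQ hB, ?_, ?_⟩
  · rw [bG_exp_start P Q B T hP, Vexp_length]
  · intro S
    rw [bG_exp_start P Q B T hP]
    have key : ∀ q : Fin Q,
        ((Vexp P Q B T).getD ((q : ℕ) * B ^ P
            + ∑ p : Fin P, (S (blockIdx q p) : ℕ) * B ^ (p : ℕ)) 0 = 1)
          ↔ ∃ p : Fin P, S (blockIdx q p) ∈ T (blockIdx q p) := by
      intro q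
      have hsum : (∑ p : Fin P, (S (blockIdx q p) : ℕ) * B ^ (p : ℕ))
          = ∑ p ∈ Finset.range P,
              (((fun n => if h : n < P then S (blockIdx q ⟨n, h⟩) else ⟨0, hB⟩) p : Fin B) : ℕ)
                * B ^ p := by
        rw [← Fin.sum_univ_eq_sum_range
          (fun n => (((if h : n < P then S (blockIdx q ⟨n, h⟩) else ⟨0, hB⟩) : Fin B) : ℕ)
            * B ^ n) P]
        refine Finset.sum_congr rfl fun p _ => ?_
        rw [dif_pos p.isLt]
      rw [hsum, Vexp_getD P Q B T q _ (digit_sum_lt B _ P), Aexp_getD]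
      constructor
      · rintro ⟨p, hp, hmem⟩
        refine ⟨⟨p, hp⟩, ?_⟩
        rw [dif_pos hp] at hmem
        have htot : totT P Q B T (q : ℕ) p = T (blockIdx q ⟨p, hp⟩) := by
          simp only [totT]
          rw [dif_pos ⟨q.isLt, hp⟩]
        rwa [htot] at hmem
      · rintro ⟨p, hmem⟩
        refine ⟨(p : ℕ), p.isLt, ?_⟩
        rw [dif_pos p.isLt]
        have htot : totT P Q B T (q : ℕ) (p : ℕ) = T (blockIdx q p) := by
          simp only [totT]
          rw [dif_pos ⟨q.isLt, p.isLt⟩]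
        rw [htot]
        exact hmem
    constructor
    · rintro ⟨q, hq⟩
      obtain ⟨p, hp⟩ := (key q).1 hq
      exact ⟨blockIdx q p, hp⟩
    · rintro ⟨i, hi⟩
      have hPQ : P * Q = Q * P := Nat.mul_comm P Q
      have hq : (i : ℕ) / P < Q := by
        rw [Nat.div_lt_iff_lt_mul hP]
        have := i.isLt
        omega
      refine ⟨⟨(i : ℕ) / P, hq⟩, (key _).2
        ⟨⟨(i : ℕ) % P, Nat.mod_lt _ hP⟩, ?_⟩⟩
      have hbi : blockIdx (⟨(i : ℕ) / P, hq⟩ : Fin Q)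
          (⟨(i : ℕ) % P, Nat.mod_lt _ hP⟩ : Fin P) = i := by
        apply Fin.ext
        simp only [blockIdx]
        rw [Nat.mul_comm ((i : ℕ) / P) P]
        exact Nat.div_add_mod _ _
      rw [hbi]
      exact hi
end
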